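/- Let G be a group, R a commutative ring (e.g., R = ℂ), α: G → Rˣ a group homomorphism, and f: G → R a crossed homomorphism with respect to α, i.e., f(uv) = f(u) + α(u)·f(v) for all u, v ∈ G. Then f vanishes on the second derived subgroup: f(g) = 0 for every g ∈ G^{(2)}, where G^{(0)} = G and G^{(k+1)} = [G^{(k)}, G^{(k)}]. -/

import Mathlib

/-!
On `ker α` the cocycle identity reads `f (u * v) = f u + f v`, so `f` restricts to a homomorphism
from `ker α` to the abelian group `(R, +)` and therefore vanishes on `⁅ker α, ker α⁆`. Since `Rˣ`
is commutative, `G⁽¹⁾ ≤ ker α`, hence `G⁽²⁾ = ⁅G⁽¹⁾, G⁽¹⁾⁆ ≤ ⁅ker α, ker α⁆`.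
-/

theorem derivedSeries_two_le_commutator_ker {G A : Type*} [Group G] [CommGroup A] (φ : G →* A) :
    derivedSeries G 2 ≤ ⁅φ.ker, φ.ker⁆ := by
  have h : derivedSeries G 1 ≤ φ.ker := Abelianization.commutator_subset_ker φ
  exact Subgroup.commutator_mono h h

section CrossedHom

variable {G R : Type*} [Group G] [Ring R] {α : G →* Rˣ} {f : G → R}

def crossedHomRestrictKer (hf : ∀ u v : G, f (u * v) = f u + (α u : R) * f v) :
    α.ker →* Multiplicative R :=
  MonoidHom.mk' (fun u => Multiplicative.ofAdd (f u)) fun u v => by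
    simp [hf, MonoidHom.mem_ker.mp u.2]

theorem crossedHom_eq_zero_of_mem_commutator_ker
    (hf : ∀ u v : G, f (u * v) = f u + (α u : R) * f v) {g : G} (hg : g ∈ ⁅α.ker, α.ker⁆) :
    f g = 0 := by
  rw [← Subgroup.map_subtype_commutator] at hg
  obtain ⟨u, hu, rfl⟩ :=
    Subgroup.map_mono (Abelianization.commutator_subset_ker (crossedHomRestrictKer hf)) hg
  exact congrArg Multiplicative.toAdd (MonoidHom.mem_ker.mp hu : crossedHomRestrictKer hf u = 1)

end CrossedHom

/-- A crossed homomorphism `f : G → R` with respect to `α : G →* Rˣ` vanishes on the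
second derived subgroup `G⁽²⁾`. -/
theorem crossed_hom_vanishes_on_second_derived {G : Type*} [Group G] {R : Type*} [CommRing R]
    (α : G →* Rˣ) (f : G → R)
    (hf : ∀ u v : G, f (u * v) = f u + (α u : R) * f v) :
    ∀ g ∈ derivedSeries G 2, f g = 0 :=
  fun _ hg =>
    crossedHom_eq_zero_of_mem_commutator_ker hf (derivedSeries_two_le_commutator_ker α hg)
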